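/- Eigenvalue ε of the Yukawa stability matrix: if the Yukawa couplings y satisfy β^y(y) = 0, then for every i one has (d/dt) β^y_i((1 + t) y) evaluated at t = 0 equal to ε y_i; that is, the Yukawa couplings themselves form an eigenvector of the linearisation of β^y at the fixed point with eigenvalue ε. -/
import Mathlib


open Matrix

noncomputable section

/-- `Z_{ij} = Tr(y_i y_j)` for real (3d Majorana, α = 1) Yukawa couplings. -/
def Zm {Ns Nf : ℕ} (y : Fin Ns → Matrix (Fin Nf) (Fin Nf) ℝ) (i j : Fin Ns) : ℝ :=
  Matrix.trace (y i * y j)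

/-- `X_{ijkl} = (1/8) Σ_σ Tr(y_{σ(i)} y_{σ(j)} y_{σ(k)} y_{σ(l)})`,
summing over all 24 permutations of the index list `(i,j,k,l)`. -/
def Xm {Ns Nf : ℕ} (y : Fin Ns → Matrix (Fin Nf) (Fin Nf) ℝ) (i j k l : Fin Ns) : ℝ :=
  (1 / 8) * ∑ σ : Equiv.Perm (Fin 4),
    Matrix.trace (y (![i, j, k, l] (σ 0)) * y (![i, j, k, l] (σ 1)) *
      (y (![i, j, k, l] (σ 2)) * y (![i, j, k, l] (σ 3))))

/-- Full permutation symmetry of the quartic coupling tensor. -/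
def FullySymm {Ns : ℕ} (lam : Fin Ns → Fin Ns → Fin Ns → Fin Ns → ℝ) : Prop :=
  ∀ i j k l, lam i j k l = lam j i k l ∧ lam i j k l = lam i k j l ∧
    lam i j k l = lam i j l k

/-- One-loop quartic beta function for 3d Majorana fermions (α = 1). -/
def betaLamM {Ns Nf : ℕ} (ε : ℝ) (lam : Fin Ns → Fin Ns → Fin Ns → Fin Ns → ℝ)
    (y : Fin Ns → Matrix (Fin Nf) (Fin Nf) ℝ) (i j k l : Fin Ns) : ℝ :=
  -ε * lam i j k l
    + ∑ m, ∑ n, (lam i j m n * lam m n k l + lam i k m n * lam m n j l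
        + lam i l m n * lam m n j k)
    - 4 * Xm y i j k l
    + (1 / 2) * ∑ m, (Zm y i m * lam m j k l + Zm y j m * lam i m k l
        + Zm y k m * lam i j m l + Zm y l m * lam i j k m)

/-- One-loop Yukawa beta function for 3d Majorana fermions (α = 1). -/
def betaYM {Ns Nf : ℕ} (ε : ℝ) (y : Fin Ns → Matrix (Fin Nf) (Fin Nf) ℝ) (i : Fin Ns) :
    Matrix (Fin Nf) (Fin Nf) ℝ :=
  (-(1 / 2) * ε) • y i
    + (1 / 2 : ℝ) • ∑ j, (y j * y j * y i + y i * (y j * y j) + (4 : ℝ) • (y j * y i * y j))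
    + (1 / 2 : ℝ) • ∑ j, (Zm y i j • y j)

def gM {Ns Nf : ℕ} (y : Fin Ns → Matrix (Fin Nf) (Fin Nf) ℝ) (i : Fin Ns) :
    Matrix (Fin Nf) (Fin Nf) ℝ :=
  (1 / 2 : ℝ) • ∑ j, (y j * y j * y i + y i * (y j * y j) + (4 : ℝ) • (y j * y i * y j))
    + (1 / 2 : ℝ) • ∑ j, (Zm y i j • y j)

lemma betaYM_scale {Ns Nf : ℕ} (ε c : ℝ) (y : Fin Ns → Matrix (Fin Nf) (Fin Nf) ℝ) (i : Fin Ns) :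
    betaYM ε (fun j => c • y j) i = (c * (-(1 / 2) * ε)) • y i + (c ^ 3) • gM y i := by
  unfold betaYM gM Zm
  have e1 : (∑ j, ((c • y j) * (c • y j) * (c • y i) + (c • y i) * ((c • y j) * (c • y j))
      + (4 : ℝ) • ((c • y j) * (c • y i) * (c • y j))))
      = c ^ 3 • ∑ j, (y j * y j * y i + y i * (y j * y j) + (4 : ℝ) • (y j * y i * y j)) := by
    rw [Finset.smul_sum]
    refine Finset.sum_congr rfl fun j _ => ?_
    simp only [smul_mul_assoc, mul_smul_comm, smul_smul]
    module
  have e2 : (∑ j, (Matrix.trace ((c • y i) * (c • y j)) • (c • y j)))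
      = c ^ 3 • ∑ j, (Matrix.trace (y i * y j) • y j) := by
    rw [Finset.smul_sum]
    refine Finset.sum_congr rfl fun j _ => ?_
    simp only [smul_mul_assoc, mul_smul_comm, trace_smul, smul_eq_mul, smul_smul]
    module
  rw [e1, e2]
  simp only [smul_smul, smul_add]
  module

/-- Eigenvalue `ε` of the Yukawa stability matrix: at a Yukawa fixed point, the couplings
themselves are an eigenvector of the linearisation of `β^y` with eigenvalue `ε`. -/
theorem yukawa_couplings_eigenvector_eps {Ns Nf : ℕ} (hNs : 1 ≤ Ns) (hNf : 1 ≤ Nf)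
    (ε : ℝ) (y : Fin Ns → Matrix (Fin Nf) (Fin Nf) ℝ) (hy : ∀ i, (y i)ᵀ = y i)
    (hfp : ∀ i, betaYM ε y i = 0) :
    ∀ i a b, deriv (fun t : ℝ => betaYM ε (fun j => (1 + t) • y j) i a b) 0
      = ε * y i a b := by
  intro i a b
  set A : ℝ := (-(1 / 2) * ε) * y i a b with hA
  set G : ℝ := gM y i a b with hG
  have hfix : A + G = 0 := by
    have h0 := hfp i
    have : ((-(1 / 2) * ε) • y i + gM y i) a b = (0 : Matrix (Fin Nf) (Fin Nf) ℝ) a b := by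
      rw [← h0]; unfold betaYM gM; simp [add_assoc]
    simp only [Matrix.add_apply, Matrix.smul_apply, smul_eq_mul, Matrix.zero_apply] at this
    rw [hA, hG]; linarith
  have hfun : (fun t : ℝ => betaYM ε (fun j => (1 + t) • y j) i a b)
      = fun t : ℝ => A * (1 + t) + G * (1 + t) ^ 3 := by
    funext t
    rw [betaYM_scale]
    simp [Matrix.add_apply, Matrix.smul_apply, smul_eq_mul, hA, hG]
    ring
  rw [hfun]
  have hd : HasDerivAt (fun t : ℝ => A * (1 + t) + G * (1 + t) ^ 3)
      (A * 1 + G * (3 * (1 + (0:ℝ)) ^ 2 * 1)) 0 := by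
    have h1 : HasDerivAt (fun t : ℝ => 1 + t) 1 (0 : ℝ) :=
      (hasDerivAt_id (0:ℝ)).const_add 1
    exact (h1.const_mul A).add (((h1.pow 3).const_mul G).congr_deriv (by ring))
  rw [hd.deriv]
  have hGA : G = -A := by linarith
  rw [hGA, hA]; ring
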